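/- Let T > 0 and 0 < α < β ≤ 1. There exists a constant C = C(α,β,T) > 0 such that for every positive integer N with δ = T/N ≤ 1 and every t ∈ [0,T], one has ∫_0^t ∫_0^{t_r} (t_r − t_u)^β (r−u)^{−α−1} du dr ≤ C. -/

import Mathlib

/-- The largest grid point `δ⌊u/δ⌋` of the uniform partition with mesh `δ` not exceeding `u`. -/
noncomputable def tgrid (δ u : ℝ) : ℝ := δ * (⌊u / δ⌋ : ℤ)

/-!
Since `t_u > u - δ` and `t_r ≤ r`, we have `t_r - t_u ≤ (r - u) + δ`, so by subadditivity of
`x ↦ x ^ β` the integrand is at most `(r - u) ^ (β - α - 1) + δ ^ β (r - u) ^ (-α - 1)`.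
Integrating in `u` bounds the inner integral by `T ^ (β - α) / (β - α) + δ ^ β (r - t_r) ^ (-α) / α`.
The function `r ↦ (r - t_r) ^ (-α)` is `δ`-periodic with integral `δ ^ (1 - α) / (1 - α)` over a
period, so over the `N` periods of `[0, T]` the second term contributes
`T δ ^ (β - α) / (α (1 - α)) ≤ T / (α (1 - α))`, using `δ ≤ 1`.
-/

open MeasureTheory intervalIntegral Set

lemma intervalIntegral_mono_of_nonneg {f g : ℝ → ℝ} {a b : ℝ} (hab : a ≤ b)
    (hf : 0 ≤ᵐ[volume.restrict (Ioc a b)] f) (hg : IntervalIntegrable g volume a b)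
    (hfg : f ≤ᵐ[volume.restrict (Ioc a b)] g) :
    ∫ x in a..b, f x ≤ ∫ x in a..b, g x := by
  rw [integral_of_le hab, integral_of_le hab]
  exact integral_mono_of_nonneg hf ((intervalIntegrable_iff_integrableOn_Ioc_of_le hab).1 hg) hfg

section Grid

variable {δ : ℝ}

lemma tgrid_le (hδ : 0 < δ) (u : ℝ) : tgrid δ u ≤ u := by
  simpa [tgrid, mul_div_cancel₀ _ hδ.ne'] using
    mul_le_mul_of_nonneg_left (Int.floor_le (u / δ)) hδ.le

lemma sub_lt_tgrid (hδ : 0 < δ) (u : ℝ) : u - δ < tgrid δ u := by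
  have := mul_lt_mul_of_pos_left (Int.lt_floor_add_one (u / δ)) hδ
  rw [mul_div_cancel₀ _ hδ.ne'] at this
  unfold tgrid; linarith

lemma tgrid_nonneg (hδ : 0 < δ) {u : ℝ} (hu : 0 ≤ u) : 0 ≤ tgrid δ u :=
  mul_nonneg hδ.le (Int.cast_nonneg (Int.floor_nonneg.2 (div_nonneg hu hδ.le)))

lemma tgrid_mono (hδ : 0 < δ) : Monotone (tgrid δ) := fun _ _ h =>
  mul_le_mul_of_nonneg_left (Int.cast_le.2 (Int.floor_le_floor (by gcongr))) hδ.le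

lemma tgrid_tgrid (hδ : 0 < δ) (u : ℝ) : tgrid δ (tgrid δ u) = tgrid δ u := by
  rw [tgrid, tgrid, mul_div_cancel_left₀ _ hδ.ne', Int.floor_intCast]

lemma tgrid_le_tgrid_of_le_tgrid (hδ : 0 < δ) {u r : ℝ} (h : u ≤ tgrid δ r) :
    tgrid δ u ≤ tgrid δ r :=
  tgrid_tgrid hδ r ▸ tgrid_mono hδ h

lemma tgrid_add_self (hδ : 0 < δ) (u : ℝ) : tgrid δ (u + δ) = tgrid δ u + δ := by
  rw [tgrid, tgrid, add_div, div_self hδ.ne', Int.floor_add_one]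
  push_cast; ring

lemma tgrid_eq_zero (hδ : 0 < δ) {u : ℝ} (h0 : 0 ≤ u) (h1 : u < δ) : tgrid δ u = 0 := by
  rw [tgrid, Int.floor_eq_zero_iff.2 ⟨div_nonneg h0 hδ.le, (div_lt_one hδ).2 h1⟩]
  simp

lemma ae_tgrid_ne : ∀ᵐ r ∂(volume : Measure ℝ), tgrid δ r ≠ r := by
  have hsub : {r : ℝ | ¬ tgrid δ r ≠ r} ⊆ range fun k : ℤ => δ * k :=
    fun r hr => ⟨⌊r / δ⌋, not_not.1 hr⟩
  exact measure_mono_null hsub ((countable_range _).measure_zero _)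

end Grid

section Kernel

variable {r s : ℝ}

lemma intervalIntegrable_sub_rpow (γ : ℝ) (hs : 0 ≤ s) (hsr : s < r) :
    IntervalIntegrable (fun u => (r - u) ^ γ) volume 0 s := by
  refine ContinuousOn.intervalIntegrable (ContinuousOn.rpow_const (by fun_prop) fun u hu => ?_)
  rw [uIcc_of_le hs] at hu
  exact Or.inl (by linarith [hu.2])

lemma integral_sub_rpow_sub_one_le {γ : ℝ} (hγ : 0 < γ) (hsr : s ≤ r) :
    ∫ u in (0:ℝ)..s, (r - u) ^ (γ - 1) ≤ r ^ γ / γ := by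
  rw [integral_comp_sub_left (fun x => x ^ (γ - 1)), sub_zero,
    integral_rpow (Or.inl (by linarith)), sub_add_cancel]
  gcongr
  exact sub_le_self _ (Real.rpow_nonneg (by linarith) _)

lemma integral_sub_rpow_neg_sub_one_le {α : ℝ} (hα : 0 < α) (hs : 0 ≤ s) (hsr : s < r) :
    ∫ u in (0:ℝ)..s, (r - u) ^ (-α - 1) ≤ (r - s) ^ (-α) / α := by
  have h0 : (0:ℝ) ∉ uIcc (r - s) r := by
    rw [uIcc_of_le (by linarith)]
    exact fun h => by linarith [h.1]
  rw [integral_comp_sub_left (fun x => x ^ (-α - 1)), sub_zero,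
    integral_rpow (Or.inr ⟨by linarith, h0⟩), sub_add_cancel, div_neg, ← neg_div, neg_sub]
  gcongr
  exact sub_le_self _ (Real.rpow_nonneg (by linarith) _)

end Kernel

section InnerIntegral

variable {α β δ : ℝ}

lemma tgrid_kernel_le (hβ0 : 0 ≤ β) (hβ1 : β ≤ 1) (hδ : 0 < δ) {u r : ℝ}
    (hu : u ≤ tgrid δ r) (hur : u < r) :
    (tgrid δ r - tgrid δ u) ^ β * (r - u) ^ (-α - 1)
      ≤ (r - u) ^ (β - α - 1) + δ ^ β * (r - u) ^ (-α - 1) := by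
  have hgrid := tgrid_le_tgrid_of_le_tgrid hδ hu
  have hgap : tgrid δ r - tgrid δ u ≤ (r - u) + δ := by
    linarith [tgrid_le hδ r, sub_lt_tgrid hδ u]
  have hpow : (tgrid δ r - tgrid δ u) ^ β ≤ (r - u) ^ β + δ ^ β :=
    (Real.rpow_le_rpow (by linarith) hgap hβ0).trans
      (Real.rpow_add_le_add_rpow (by linarith) hδ.le hβ0 hβ1)
  calc (tgrid δ r - tgrid δ u) ^ β * (r - u) ^ (-α - 1)
      ≤ ((r - u) ^ β + δ ^ β) * (r - u) ^ (-α - 1) := by gcongr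
    _ = (r - u) ^ (β - α - 1) + δ ^ β * (r - u) ^ (-α - 1) := by
        rw [add_mul, ← Real.rpow_add (by linarith)]
        ring_nf

lemma integral_tgrid_kernel_le (hα0 : 0 < α) (hαβ : α < β) (hβ1 : β ≤ 1) (hδ : 0 < δ)
    {r : ℝ} (hr : 0 ≤ r) (hsr : tgrid δ r < r) :
    ∫ u in (0:ℝ)..tgrid δ r, (tgrid δ r - tgrid δ u) ^ β * (r - u) ^ (-α - 1)
      ≤ r ^ (β - α) / (β - α) + δ ^ β / α * (r - tgrid δ r) ^ (-α) := by
  have hs := tgrid_nonneg hδ hr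
  have hint₁ := intervalIntegrable_sub_rpow (β - α - 1) hs hsr
  have hint₂ := intervalIntegrable_sub_rpow (-α - 1) hs hsr
  calc ∫ u in (0:ℝ)..tgrid δ r, (tgrid δ r - tgrid δ u) ^ β * (r - u) ^ (-α - 1)
      ≤ ∫ u in (0:ℝ)..tgrid δ r, ((r - u) ^ (β - α - 1) + δ ^ β * (r - u) ^ (-α - 1)) := by
        refine intervalIntegral_mono_of_nonneg hs ?_ (hint₁.add (hint₂.const_mul _)) ?_ <;>
          refine (ae_restrict_iff' measurableSet_Ioc).2 (ae_of_all _ fun u hu => ?_)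
        · exact mul_nonneg (Real.rpow_nonneg (by linarith [tgrid_le_tgrid_of_le_tgrid hδ hu.2]) _)
            (Real.rpow_nonneg (by linarith [hu.2]) _)
        · exact tgrid_kernel_le (by linarith) hβ1 hδ hu.2 (by linarith [hu.2])
    _ = (∫ u in (0:ℝ)..tgrid δ r, (r - u) ^ (β - α - 1))
          + δ ^ β * ∫ u in (0:ℝ)..tgrid δ r, (r - u) ^ (-α - 1) := by
        rw [integral_add hint₁ (hint₂.const_mul _), intervalIntegral.integral_const_mul]
    _ ≤ r ^ (β - α) / (β - α) + δ ^ β * ((r - tgrid δ r) ^ (-α) / α) := by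
        gcongr
        · exact integral_sub_rpow_sub_one_le (by linarith) hsr.le
        · exact integral_sub_rpow_neg_sub_one_le hα0 hs hsr
    _ = r ^ (β - α) / (β - α) + δ ^ β / α * (r - tgrid δ r) ^ (-α) := by ring

end InnerIntegral

section OuterIntegral

variable {α δ : ℝ}

lemma periodic_sub_tgrid_rpow (hδ : 0 < δ) (γ : ℝ) :
    Function.Periodic (fun r => (r - tgrid δ r) ^ γ) δ := fun r => by
  simp only [tgrid_add_self hδ, add_sub_add_right_eq_sub]

lemma sub_tgrid_rpow_ae_eq (hδ : 0 < δ) (γ : ℝ) :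
    ∀ᵐ r ∂(volume : Measure ℝ), r ∈ uIoc 0 δ → (r - tgrid δ r) ^ γ = r ^ γ := by
  filter_upwards [compl_mem_ae_iff.2 (measure_singleton δ)] with r hne hr
  rw [uIoc_of_le hδ.le] at hr
  rw [tgrid_eq_zero hδ hr.1.le (lt_of_le_of_ne hr.2 hne), sub_zero]

lemma intervalIntegrable_sub_tgrid_rpow (hα1 : α < 1) (hδ : 0 < δ) (a b : ℝ) :
    IntervalIntegrable (fun r => (r - tgrid δ r) ^ (-α)) volume a b :=
  (periodic_sub_tgrid_rpow hδ _).intervalIntegrable₀ hδ.ne'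
    ((intervalIntegrable_rpow' (by linarith)).congr_ae <| Filter.EventuallyEq.symm <|
      (ae_restrict_iff' measurableSet_uIoc).2 (sub_tgrid_rpow_ae_eq hδ _)) a b

lemma integral_sub_tgrid_rpow_nat_mul (hα1 : α < 1) (hδ : 0 < δ) (N : ℕ) :
    ∫ r in (0:ℝ)..N * δ, (r - tgrid δ r) ^ (-α) = N * (δ ^ (1 - α) / (1 - α)) := by
  have h := (periodic_sub_tgrid_rpow hδ (-α)).intervalIntegral_add_zsmul_eq N 0
    (intervalIntegrable_sub_tgrid_rpow hα1 hδ)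
  simp only [zero_add, zsmul_eq_mul, Int.cast_natCast] at h
  rw [h, integral_congr_ae (sub_tgrid_rpow_ae_eq hδ _), integral_rpow (Or.inl (by linarith)),
    Real.zero_rpow (by linarith), sub_zero, neg_add_eq_sub]

lemma integral_sub_tgrid_rpow_le (hα1 : α < 1) (hδ : 0 < δ) {N : ℕ} {t : ℝ} (ht0 : 0 ≤ t)
    (htN : t ≤ N * δ) :
    ∫ r in (0:ℝ)..t, (r - tgrid δ r) ^ (-α) ≤ N * (δ ^ (1 - α) / (1 - α)) := by
  rw [← integral_sub_tgrid_rpow_nat_mul hα1 hδ]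
  refine integral_mono_interval le_rfl ht0 htN (ae_of_all _ fun r => ?_)
    (intervalIntegrable_sub_tgrid_rpow hα1 hδ _ _)
  exact Real.rpow_nonneg (sub_nonneg.2 (tgrid_le hδ r)) _

end OuterIntegral

lemma integral_integral_tgrid_kernel_le {α β δ T t : ℝ} (hα0 : 0 < α) (hαβ : α < β)
    (hβ1 : β ≤ 1) (hδ : 0 < δ) (ht0 : 0 ≤ t) (htT : t ≤ T) :
    ∫ r in (0:ℝ)..t, ∫ u in (0:ℝ)..tgrid δ r,
        (tgrid δ r - tgrid δ u) ^ β * (r - u) ^ (-α - 1)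
      ≤ T ^ (β - α) / (β - α) * t + δ ^ β / α * ∫ r in (0:ℝ)..t, (r - tgrid δ r) ^ (-α) := by
  have hF := intervalIntegrable_sub_tgrid_rpow (hαβ.trans_le hβ1) hδ 0 t
  calc ∫ r in (0:ℝ)..t, ∫ u in (0:ℝ)..tgrid δ r,
          (tgrid δ r - tgrid δ u) ^ β * (r - u) ^ (-α - 1)
      ≤ ∫ r in (0:ℝ)..t, (T ^ (β - α) / (β - α) + δ ^ β / α * (r - tgrid δ r) ^ (-α)) := by
        refine intervalIntegral_mono_of_nonneg ht0 ?_ (intervalIntegrable_const.add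
          (hF.const_mul _)) ?_
        · refine (ae_restrict_iff' measurableSet_Ioc).2 (ae_of_all _ fun r hr => ?_)
          refine integral_nonneg (tgrid_nonneg hδ hr.1.le) fun u hu => ?_
          exact mul_nonneg (Real.rpow_nonneg (by linarith [tgrid_le_tgrid_of_le_tgrid hδ hu.2]) _)
            (Real.rpow_nonneg (by linarith [hu.2, tgrid_le hδ r]) _)
        -- Grid points are null; at `r = t_r` the inner integrand is not integrable near `u = r`.
        · filter_upwards [ae_restrict_of_ae ae_tgrid_ne, ae_restrict_mem measurableSet_Ioc]
            with r hne hr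
          refine (integral_tgrid_kernel_le hα0 hαβ hβ1 hδ hr.1.le
            ((tgrid_le hδ r).lt_of_ne hne)).trans ?_
          gcongr <;> linarith [hr.1, hr.2]
    _ = T ^ (β - α) / (β - α) * t + δ ^ β / α * ∫ r in (0:ℝ)..t, (r - tgrid δ r) ^ (-α) := by
        rw [integral_add intervalIntegrable_const (hF.const_mul _),
          intervalIntegral.integral_const_mul, intervalIntegral.integral_const, smul_eq_mul,
          sub_zero, mul_comm t]

/-- For `0 < α < β ≤ 1` there is `C = C(α,β,T)` such that for every partition with mesh
`δ = T/N ≤ 1` and every `t ∈ [0,T]`,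
`∫_0^t ∫_0^{t_r} (t_r − t_u)^β (r−u)^{−α−1} du dr ≤ C`. -/
theorem stmt_4 (α β T : ℝ) (hα0 : 0 < α) (hαβ : α < β) (hβ1 : β ≤ 1) (hT : 0 < T) :
    ∃ C : ℝ, 0 < C ∧ ∀ N : ℕ, 0 < N → T / N ≤ 1 →
      ∀ t ∈ Set.Icc (0:ℝ) T,
        (∫ r in (0:ℝ)..t, ∫ u in (0:ℝ)..tgrid (T / N) r,
            (tgrid (T / N) r - tgrid (T / N) u) ^ β * (r - u) ^ (-α - 1))
          ≤ C := by
  have hα1 : α < 1 := hαβ.trans_le hβ1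
  have hβα : 0 < β - α := sub_pos.2 hαβ
  have h1α : 0 < 1 - α := sub_pos.2 hα1
  refine ⟨T ^ (β - α) / (β - α) * T + T / (α * (1 - α)), by positivity, ?_⟩
  rintro N hN hδ1 t ⟨ht0, htT⟩
  set δ := T / N
  have hδ : 0 < δ := div_pos hT (Nat.cast_pos.2 hN)
  have hNδ : (N : ℝ) * δ = T := mul_div_cancel₀ T (Nat.cast_pos.2 hN).ne'
  have hFt := integral_sub_tgrid_rpow_le hα1 hδ ht0 (htT.trans_eq hNδ.symm)
  have hδpow : δ ^ β * δ ^ (1 - α) = δ * δ ^ (β - α) := by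
    rw [← Real.rpow_add hδ, ← Real.rpow_one_add' hδ.le (by linarith)]; ring_nf
  calc _ ≤ T ^ (β - α) / (β - α) * t + δ ^ β / α * ∫ r in (0:ℝ)..t, (r - tgrid δ r) ^ (-α) :=
        integral_integral_tgrid_kernel_le hα0 hαβ hβ1 hδ ht0 htT
    _ ≤ T ^ (β - α) / (β - α) * T + δ ^ β / α * (N * (δ ^ (1 - α) / (1 - α))) := by gcongr
    _ = T ^ (β - α) / (β - α) * T + N * δ * δ ^ (β - α) / (α * (1 - α)) := by
        rw [mul_assoc _ δ, ← hδpow]; field_simp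
    _ ≤ T ^ (β - α) / (β - α) * T + T / (α * (1 - α)) := by
        rw [hNδ]
        gcongr
        exact mul_le_of_le_one_right hT.le (Real.rpow_le_one hδ.le hδ1 hβα.le)
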